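/- If every codeword of the extended code C_ex has Hamming weight divisible by 4, then C contains no only-odd-decomposable codeword. -/

import Mathlib

open Finset

/-- Support of a binary vector: the set of nonzero coordinates. -/
def supp {n : ℕ} (v : Fin n → ZMod 2) : Finset (Fin n) :=
  Finset.univ.filter fun i => v i ≠ 0

/-- Hamming weight. -/
def wt {n : ℕ} (v : Fin n → ZMod 2) : ℕ := (supp v).card

/-- A nonzero codeword of `D` is a zero neighbor (minimal codeword) if no nonzero
codeword of `D` has support strictly contained in its support. -/
def IsZeroNeighbor {n : ℕ} (D : Set (Fin n → ZMod 2)) (v : Fin n → ZMod 2) : Prop :=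
  v ∈ D ∧ v ≠ 0 ∧ ∀ v' ∈ D, v' ≠ 0 → ¬ supp v' ⊂ supp v

/-- `v` is decomposable in `D` if it is the sum of two nonzero codewords of `D`
with disjoint supports. -/
def Decomposable {n : ℕ} (D : Set (Fin n → ZMod 2)) (v : Fin n → ZMod 2) : Prop :=
  ∃ v1 v2, v1 ∈ D ∧ v2 ∈ D ∧ v1 ≠ 0 ∧ v2 ≠ 0 ∧
    Disjoint (supp v1) (supp v2) ∧ v = v1 + v2

/-- Extension of a vector by its overall parity bit. -/
def extVec {n : ℕ} (v : Fin n → ZMod 2) : Fin (n + 1) → ZMod 2 :=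
  Fin.snoc v (∑ i, v i)

/-- The extended code. -/
def extCode {n : ℕ} (C : Submodule (ZMod 2) (Fin n → ZMod 2)) :
    Set (Fin (n + 1) → ZMod 2) :=
  extVec '' (C : Set (Fin n → ZMod 2))

/-- An even-weight codeword is only-odd-decomposable if it is decomposable and in every
decomposition into nonzero disjoint-support codewords both parts have odd weight. -/
def OnlyOddDecomposable {n : ℕ} (C : Submodule (ZMod 2) (Fin n → ZMod 2))
    (v : Fin n → ZMod 2) : Prop :=
  Even (wt v) ∧ Decomposable (C : Set (Fin n → ZMod 2)) v ∧
    ∀ v1 v2, v1 ∈ C → v2 ∈ C → v1 ≠ 0 → v2 ≠ 0 →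
      Disjoint (supp v1) (supp v2) → v = v1 + v2 → Odd (wt v1) ∧ Odd (wt v2)

/-- `L_w(D)`: the number of zero neighbors of weight `w` in `D`. -/
noncomputable def Lw {n : ℕ} (D : Set (Fin n → ZMod 2)) (w : ℕ) : ℕ :=
  {v : Fin n → ZMod 2 | IsZeroNeighbor D v ∧ wt v = w}.ncard

/-- `N_w(C)`: the number of only-odd-decomposable codewords of weight `w` in `C`. -/
noncomputable def Nw {n : ℕ} (C : Submodule (ZMod 2) (Fin n → ZMod 2)) (w : ℕ) : ℕ :=
  {v : Fin n → ZMod 2 | v ∈ C ∧ OnlyOddDecomposable C v ∧ wt v = w}.ncard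

/-- Action of a coordinate permutation on a vector. -/
def permVec {n : ℕ} (π : Equiv.Perm (Fin n)) (v : Fin n → ZMod 2) : Fin n → ZMod 2 :=
  v ∘ π.symm

/-- `π` is an automorphism of the code `D`. -/
def IsAut {n : ℕ} (D : Set (Fin n → ZMod 2)) (π : Equiv.Perm (Fin n)) : Prop :=
  permVec π '' D = D

/-- The even weight subcode of `C`, as a set. -/
def evenSub {n : ℕ} (C : Submodule (ZMod 2) (Fin n → ZMod 2)) :
    Set (Fin n → ZMod 2) :=
  {v : Fin n → ZMod 2 | v ∈ C ∧ Even (wt v)}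

/-! Extending by the parity bit raises the weight by `wt % 2`. So if `v = v₁ + v₂` with disjoint
supports and `wt v₁`, `wt v₂` odd, divisibility by 4 in the extended code forces
`wt v₁ ≡ wt v₂ ≡ 3` and `wt v ≡ 0 (mod 4)`, against `wt v = wt v₁ + wt v₂ ≡ 2`. -/

lemma supp_add_of_disjoint {n : ℕ} {v₁ v₂ : Fin n → ZMod 2}
    (h : Disjoint (supp v₁) (supp v₂)) : supp (v₁ + v₂) = supp v₁ ∪ supp v₂ := by
  ext i
  have hi : v₁ i = 0 ∨ v₂ i = 0 := by
    by_contra! hc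
    exact disjoint_left.mp h (show i ∈ supp v₁ by simpa [supp] using hc.1)
      (by simpa [supp] using hc.2)
  have key : ∀ a b : ZMod 2, a = 0 ∨ b = 0 → (a + b ≠ 0 ↔ a ≠ 0 ∨ b ≠ 0) := by decide
  simpa [supp] using key _ _ hi

lemma wt_add_of_disjoint {n : ℕ} {v₁ v₂ : Fin n → ZMod 2}
    (h : Disjoint (supp v₁) (supp v₂)) : wt (v₁ + v₂) = wt v₁ + wt v₂ := by
  rw [wt, supp_add_of_disjoint h, card_union_of_disjoint h, wt, wt]

lemma wt_snoc {n : ℕ} (v : Fin n → ZMod 2) (a : ZMod 2) :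
    wt (Fin.snoc v a : Fin (n + 1) → ZMod 2) = wt v + if a = 0 then 0 else 1 := by
  simp only [wt, supp, card_filter, Fin.sum_univ_castSucc, Fin.snoc_castSucc, Fin.snoc_last]
  split_ifs <;> simp_all

lemma sum_eq_wt {n : ℕ} (v : Fin n → ZMod 2) : ∑ i, v i = (wt v : ZMod 2) := by
  have hone : ∀ a : ZMod 2, a ≠ 0 → a = 1 := by decide
  calc ∑ i, v i = ∑ i ∈ supp v, v i := (sum_filter_ne_zero _).symm
    _ = ∑ _i ∈ supp v, 1 := sum_congr rfl fun i hi => hone _ (mem_filter.mp hi).2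
    _ = wt v := by simp [wt]

lemma wt_extVec {n : ℕ} (v : Fin n → ZMod 2) : wt (extVec v) = wt v + wt v % 2 := by
  rw [extVec, wt_snoc, sum_eq_wt]
  rcases Nat.even_or_odd (wt v) with h | h
  · simp [ZMod.natCast_eq_zero_iff_even.mpr h, Nat.even_iff.mp h]
  · simp [ZMod.natCast_eq_zero_iff_even, Nat.not_even_iff_odd.mpr h, Nat.odd_iff.mp h]

theorem no_only_odd_decomposable_of_doubly_even {n : ℕ}
    (C : Submodule (ZMod 2) (Fin n → ZMod 2))
    (h4 : ∀ w ∈ extCode C, 4 ∣ wt w) :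
    ∀ v ∈ C, ¬ OnlyOddDecomposable C v := by
  rintro v hv ⟨-, ⟨v₁, v₂, h₁, h₂, hne₁, hne₂, hdis, rfl⟩, hodd⟩
  obtain ⟨hodd₁, hodd₂⟩ := hodd v₁ v₂ h₁ h₂ hne₁ hne₂ hdis rfl
  have h4v := h4 _ ⟨_, hv, rfl⟩
  have h4v₁ := h4 _ ⟨_, h₁, rfl⟩
  have h4v₂ := h4 _ ⟨_, h₂, rfl⟩
  rw [wt_extVec] at h4v h4v₁ h4v₂
  rw [wt_add_of_disjoint hdis] at h4v
  rw [Nat.odd_iff] at hodd₁ hodd₂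
  omega
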